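/- Derivative transfer under radial projection: with the tube metric dr² + sinh²r dθ² + cosh²r dz², if a map φ of the cylinder T_R = {r = R} satisfies |dφ − id|_R ≤ δ' (measured in the orthonormal framing by principal curvature directions on T_R), then the conjugated map on T_r obtained by radial projection satisfies |dφ − id|_r ≤ (tanh R / tanh r)·δ'. -/
import Mathlib


/-- The rescaling matrix diag(sinh ρ, cosh ρ) converting the coordinate frame
(∂_θ, ∂_z) into the orthonormal frame of the equidistant cylinder T_ρ. -/
noncomputable def tubeFrame (ρ : ℝ) : Matrix (Fin 2) (Fin 2) ℝ :=
  Matrix.diagonal ![Real.sinh ρ, Real.cosh ρ]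

lemma tubeFrame_inv (ρ : ℝ) (hρ : 0 < ρ) :
    (tubeFrame ρ)⁻¹ = Matrix.diagonal ![(Real.sinh ρ)⁻¹, (Real.cosh ρ)⁻¹] := by
  have hs : Real.sinh ρ ≠ 0 := ne_of_gt (by positivity)
  have hc : Real.cosh ρ ≠ 0 := ne_of_gt (Real.cosh_pos ρ)
  apply Matrix.inv_eq_right_inv
  ext i j
  fin_cases i <;> fin_cases j <;>
    simp [tubeFrame, Matrix.mul_apply, Fin.sum_univ_two, Matrix.one_apply,
      mul_inv_cancel₀, hs, hc]

lemma conj00 (ρ : ℝ) (hρ : 0 < ρ) (A : Matrix (Fin 2) (Fin 2) ℝ) :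
    (tubeFrame ρ * A * (tubeFrame ρ)⁻¹ - 1) 0 0 = A 0 0 - 1 := by
  have hs : Real.sinh ρ ≠ 0 := ne_of_gt (by positivity)
  rw [tubeFrame_inv ρ hρ]
  simp [tubeFrame, Matrix.mul_apply, Fin.sum_univ_two, Matrix.one_apply,
    mul_inv_cancel_right₀ hs (A 0 0)]
  field_simp

lemma conj11 (ρ : ℝ) (hρ : 0 < ρ) (A : Matrix (Fin 2) (Fin 2) ℝ) :
    (tubeFrame ρ * A * (tubeFrame ρ)⁻¹ - 1) 1 1 = A 1 1 - 1 := by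
  have hc : Real.cosh ρ ≠ 0 := ne_of_gt (Real.cosh_pos ρ)
  rw [tubeFrame_inv ρ hρ]
  simp [tubeFrame, Matrix.mul_apply, Fin.sum_univ_two, Matrix.one_apply,
    mul_inv_cancel_right₀ hc (A 1 1)]
  field_simp

lemma conj01 (ρ : ℝ) (hρ : 0 < ρ) (A : Matrix (Fin 2) (Fin 2) ℝ) :
    (tubeFrame ρ * A * (tubeFrame ρ)⁻¹ - 1) 0 1 = Real.tanh ρ * A 0 1 := by
  rw [tubeFrame_inv ρ hρ]
  simp [tubeFrame, Matrix.mul_apply, Fin.sum_univ_two, Matrix.one_apply,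
    Real.tanh_eq_sinh_div_cosh, div_eq_mul_inv]
  ring

lemma conj10 (ρ : ℝ) (hρ : 0 < ρ) (A : Matrix (Fin 2) (Fin 2) ℝ) :
    (tubeFrame ρ * A * (tubeFrame ρ)⁻¹ - 1) 1 0 = (Real.tanh ρ)⁻¹ * A 1 0 := by
  have hs : Real.sinh ρ ≠ 0 := ne_of_gt (by positivity)
  have hc : Real.cosh ρ ≠ 0 := ne_of_gt (Real.cosh_pos ρ)
  rw [tubeFrame_inv ρ hρ]
  simp [tubeFrame, Matrix.mul_apply, Fin.sum_univ_two, Matrix.one_apply,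
    Real.tanh_eq_sinh_div_cosh]
  field_simp

/-- if the coordinate matrix A of dφ satisfies the max-entry bound
|D_R A D_R⁻¹ − id| ≤ δ' in the orthonormal frame of T_R, then in the orthonormal
frame of T_r (0 < r ≤ R) it satisfies |D_r A D_r⁻¹ − id| ≤ (tanh R/tanh r)·δ'. -/
theorem radial_conjugation_estimate
    (A : Matrix (Fin 2) (Fin 2) ℝ) (r R δ' : ℝ) (hr : 0 < r) (hrR : r ≤ R)
    (h : ∀ i j, |(tubeFrame R * A * (tubeFrame R)⁻¹ - 1) i j| ≤ δ') :
    ∀ i j, |(tubeFrame r * A * (tubeFrame r)⁻¹ - 1) i j|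
      ≤ (Real.tanh R / Real.tanh r) * δ' := by
  have hR : 0 < R := lt_of_lt_of_le hr hrR
  have htr : 0 < Real.tanh r := by
    rw [Real.tanh_eq_sinh_div_cosh]
    have := Real.sinh_pos_iff.mpr hr
    positivity
  have htR : 0 < Real.tanh R := by
    rw [Real.tanh_eq_sinh_div_cosh]
    have := Real.sinh_pos_iff.mpr hR
    positivity
  have htrR : Real.tanh r ≤ Real.tanh R := by
    rw [Real.tanh_eq_sinh_div_cosh, Real.tanh_eq_sinh_div_cosh]
    rw [div_le_div_iff₀ (Real.cosh_pos r) (Real.cosh_pos R)]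
    have h1 : 0 ≤ Real.sinh (R - r) := Real.sinh_nonneg_iff.mpr (sub_nonneg.mpr hrR)
    rw [Real.sinh_sub] at h1
    linarith
  have hone : 1 ≤ Real.tanh R / Real.tanh r := (one_le_div htr).mpr htrR
  have hδ : 0 ≤ δ' := le_trans (abs_nonneg _) (h 0 0)
  have hdiag : δ' ≤ (Real.tanh R / Real.tanh r) * δ' := le_mul_of_one_le_left hδ hone
  intro i j
  fin_cases i <;> fin_cases j
  · rw [show ((⟨0, by norm_num⟩ : Fin 2)) = 0 from rfl, conj00 r hr]
    have := h 0 0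
    rw [conj00 R hR] at this
    linarith
  · rw [show ((⟨0, by norm_num⟩ : Fin 2)) = 0 from rfl,
      show ((⟨1, by norm_num⟩ : Fin 2)) = 1 from rfl, conj01 r hr]
    have hh := h 0 1
    rw [conj01 R hR] at hh
    have key : Real.tanh r * A 0 1
        = (Real.tanh r / Real.tanh R) * (Real.tanh R * A 0 1) := by
      field_simp
    rw [key, abs_mul]
    have h1 : |Real.tanh r / Real.tanh R| ≤ 1 := by
      rw [abs_of_pos (div_pos htr htR)]
      exact (div_le_one htR).mpr htrR
    calc |Real.tanh r / Real.tanh R| * |Real.tanh R * A 0 1|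
        ≤ 1 * δ' := mul_le_mul h1 hh (abs_nonneg _) zero_le_one
      _ = δ' := one_mul _
      _ ≤ (Real.tanh R / Real.tanh r) * δ' := hdiag
  · rw [show ((⟨0, by norm_num⟩ : Fin 2)) = 0 from rfl,
      show ((⟨1, by norm_num⟩ : Fin 2)) = 1 from rfl, conj10 r hr]
    have hh := h 1 0
    rw [conj10 R hR] at hh
    have key : (Real.tanh r)⁻¹ * A 1 0
        = (Real.tanh R / Real.tanh r) * ((Real.tanh R)⁻¹ * A 1 0) := by
      field_simp
    rw [key, abs_mul, abs_of_pos (div_pos htR htr)]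
    exact mul_le_mul_of_nonneg_left hh (le_of_lt (div_pos htR htr))
  · rw [show ((⟨1, by norm_num⟩ : Fin 2)) = 1 from rfl, conj11 r hr]
    have := h 1 1
    rw [conj11 R hR] at this
    linarith
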